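/- arXiv:1602.01201 — 2 statements merged into one kernel-verified Lean document; each statement's English description precedes it below -/
import Mathlib

section
/- For ⃗v = (v₁, v₂) ∈ H¹(ℝ,ℂ)², the second variation of S_ω at ⃗φ_ω decomposes as ⟨S_ω''(⃗φ_ω)⃗v, ⃗v⟩ = ⟨L₃ Re v₁, Re v₁⟩ + ⟨L₁ Im v₁, Im v₁⟩ + ⟨L_{γ/κ₁} Re v₂, Re v₂⟩ + ⟨L_{−γ/κ₁} Im v₂, Im v₂⟩. -/
open MeasureTheory Real Asymptotics

/-- The soliton profile `φ_ω(x) = √(2ω) sech(√ω x)`, with `sech y = 1 / cosh y`. -/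
noncomputable def phiW (ω x : ℝ) : ℝ :=
  Real.sqrt (2 * ω) * (1 / Real.cosh (Real.sqrt ω * x))

/-- The linearized operator `L_a u = -u'' + ω u - a φ_ω² u`. -/
noncomputable def Lop (ω a : ℝ) (u : ℝ → ℝ) (x : ℝ) : ℝ :=
  -(deriv (deriv u) x) + ω * u x - a * (phiW ω x) ^ 2 * u x

/-- The quadratic form `⟨L_a u, u⟩ = ∫ (|u'|² + ω u² - a φ_ω² u²)`. -/
noncomputable def QLa (ω a : ℝ) (u : ℝ → ℝ) : ℝ :=
  ∫ x : ℝ, ((deriv u x) ^ 2 + ω * (u x) ^ 2 - a * (phiW ω x) ^ 2 * (u x) ^ 2)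

/-- Pairs of complex-valued functions on ℝ. -/
abbrev Pair := (ℝ → ℂ) × (ℝ → ℂ)

/-- The energy functional `E`. -/
noncomputable def En (κ₁ κ₂ γ : ℝ) (u : Pair) : ℝ :=
  ((1 / 2) * ∫ x : ℝ, ‖deriv u.1 x‖ ^ 2) - ((κ₁ / 4) * ∫ x : ℝ, ‖u.1 x‖ ^ 4)
  + ((1 / 2) * ∫ x : ℝ, ‖deriv u.2 x‖ ^ 2) - ((κ₂ / 4) * ∫ x : ℝ, ‖u.2 x‖ ^ 4)
  - (γ / 2) * (∫ x : ℝ, (u.1 x) ^ 2 * (starRingEnd ℂ (u.2 x)) ^ 2).re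

/-- The charge functional `Q`. -/
noncomputable def Qm (u : Pair) : ℝ :=
  (1 / 2) * ((∫ x : ℝ, ‖u.1 x‖ ^ 2) + ∫ x : ℝ, ‖u.2 x‖ ^ 2)

/-- The action `S_ω = E + ω Q`. -/
noncomputable def Sfun (κ₁ κ₂ γ ω : ℝ) (u : Pair) : ℝ :=
  En κ₁ κ₂ γ u + ω * Qm u

/-- The semitrivial profile `⃗φ_ω = (κ₁^{-1/2} φ_ω, 0)`. -/
noncomputable def phivec (κ₁ ω : ℝ) : Pair :=
  (fun x => ((phiW ω x / Real.sqrt κ₁ : ℝ) : ℂ), fun _ => 0)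

/-- The profile `⃗ψ_ω = (0, κ₁^{-1/2} φ_ω)`. -/
noncomputable def psivec (κ₁ ω : ℝ) : Pair :=
  (fun _ => 0, fun x => ((phiW ω x / Real.sqrt κ₁ : ℝ) : ℂ))

/-- Real `L²`-inner product on pairs: `(⃗u,⃗v)_H = Σ_j Re ∫ u_j \bar v_j`. -/
noncomputable def Hinner (u v : Pair) : ℝ :=
  (∫ x : ℝ, (u.1 x) * (starRingEnd ℂ (v.1 x))).re
  + (∫ x : ℝ, (u.2 x) * (starRingEnd ℂ (v.2 x))).re

/-- Multiplication of a pair by `i`. -/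
noncomputable def Ivec (u : Pair) : Pair :=
  (fun x => Complex.I * u.1 x, fun x => Complex.I * u.2 x)

/-- Squared `X = H¹(ℝ,ℂ)²` norm. -/
noncomputable def XnormSq (u : Pair) : ℝ :=
  (∫ x : ℝ, ‖u.1 x‖ ^ 2) + (∫ x : ℝ, ‖deriv u.1 x‖ ^ 2)
  + (∫ x : ℝ, ‖u.2 x‖ ^ 2) + (∫ x : ℝ, ‖deriv u.2 x‖ ^ 2)

/-- Squared `H¹(ℝ,ℝ)` norm. -/
noncomputable def H1normSq (v : ℝ → ℝ) : ℝ :=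
  (∫ x : ℝ, (v x) ^ 2) + (∫ x : ℝ, (deriv v x) ^ 2)

/-- Membership in `H¹(ℝ,ℝ)`. -/
noncomputable def InH1r (v : ℝ → ℝ) : Prop :=
  Differentiable ℝ v ∧ MemLp v 2 (volume : Measure ℝ) ∧
    MemLp (deriv v) 2 (volume : Measure ℝ)

/-- Membership in `H¹(ℝ,ℂ)`. -/
noncomputable def InH1c (v : ℝ → ℂ) : Prop :=
  Differentiable ℝ v ∧ MemLp v 2 (volume : Measure ℝ) ∧
    MemLp (deriv v) 2 (volume : Measure ℝ)

/-- Membership of a pair in `X = H¹(ℝ,ℂ)²` with even symmetry. -/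
noncomputable def InXeven (u : Pair) : Prop :=
  InH1c u.1 ∧ InH1c u.2 ∧ (∀ x, u.1 (-x) = u.1 x) ∧ (∀ x, u.2 (-x) = u.2 x)

/-!
Along the line `t ↦ ⃗φ_ω + t ⃗v` every term of the action density is a polynomial of degree at
most four in `t` whose coefficients are integrable, because functions in `H¹(ℝ)` are bounded.
Hence `S_ω(⃗φ_ω + t ⃗v)` is a quartic polynomial in `t` and its second derivative at `0` is twice
the integral of the `t²` coefficient. Since `⃗φ_ω = (κ₁^{-1/2} φ_ω, 0)` is real, that coefficient
splits into the real and imaginary parts of `v₁, v₂`, and `κ₁ ‖κ₁^{-1/2} φ_ω‖² = φ_ω²` turns the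
four pieces into `⟨L_a ·, ·⟩` with `a = 3, 1, γ/κ₁, -γ/κ₁`.
-/

open ComplexConjugate

section Quartic

variable {α : Type*} [MeasurableSpace α] {μ : Measure α}

def IsIntegrableQuartic (μ : Measure α) (f : ℝ → α → ℝ) (c : α → ℝ) : Prop :=
  ∃ a b d e : α → ℝ, Integrable a μ ∧ Integrable b μ ∧ Integrable c μ ∧ Integrable d μ ∧
    Integrable e μ ∧ ∀ t x, f t x = a x + t * b x + t ^ 2 * c x + t ^ 3 * d x + t ^ 4 * e x

lemma iteratedDeriv_two_quartic (a b c d e : ℝ) :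
    iteratedDeriv 2 (fun t : ℝ => a + t * b + t ^ 2 * c + t ^ 3 * d + t ^ 4 * e) 0 = 2 * c := by
  rw [iteratedDeriv_fun_add (by fun_prop) (by fun_prop),
    iteratedDeriv_fun_add (by fun_prop) (by fun_prop),
    iteratedDeriv_fun_add (by fun_prop) (by fun_prop), iteratedDeriv_const_add two_pos]
  simp [iteratedDeriv_fun_id]

namespace IsIntegrableQuartic

variable {f g : ℝ → α → ℝ} {c c' : α → ℝ}

lemma iteratedDeriv_two_integral (h : IsIntegrableQuartic μ f c) :
    iteratedDeriv 2 (fun t => ∫ x, f t x ∂μ) 0 = 2 * ∫ x, c x ∂μ := by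
  obtain ⟨a, b, d, e, ha, hb, hc, hd, he, hf⟩ := h
  have hF : (fun t => ∫ x, f t x ∂μ) = fun t => (∫ x, a x ∂μ) + t * (∫ x, b x ∂μ)
      + t ^ 2 * (∫ x, c x ∂μ) + t ^ 3 * (∫ x, d x ∂μ) + t ^ 4 * (∫ x, e x ∂μ) := by
    funext t
    simp_rw [hf t]
    simp (disch := fun_prop) only [integral_add, integral_const_mul]
  rw [hF, iteratedDeriv_two_quartic]

lemma congr (h : IsIntegrableQuartic μ f c) (hfg : ∀ t x, f t x = g t x)
    (hc : ∀ x, c x = c' x) : IsIntegrableQuartic μ g c' := by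
  obtain ⟨a, b, d, e, ha, hb, hc', hd, he, hf⟩ := h
  exact ⟨a, b, d, e, ha, hb, hc'.congr (ae_of_all _ hc), hd, he,
    fun t x => by rw [← hfg, hf, hc]⟩

lemma add (hf : IsIntegrableQuartic μ f c) (hg : IsIntegrableQuartic μ g c') :
    IsIntegrableQuartic μ (fun t x => f t x + g t x) (fun x => c x + c' x) := by
  obtain ⟨a, b, d, e, ha, hb, hc, hd, he, hf⟩ := hf
  obtain ⟨a', b', d', e', ha', hb', hc', hd', he', hg⟩ := hg
  exact ⟨_, _, _, _, ha.add ha', hb.add hb', hc.add hc', hd.add hd', he.add he',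
    fun t x => by simp only [hf, hg, Pi.add_apply]; ring⟩

lemma sub (hf : IsIntegrableQuartic μ f c) (hg : IsIntegrableQuartic μ g c') :
    IsIntegrableQuartic μ (fun t x => f t x - g t x) (fun x => c x - c' x) := by
  obtain ⟨a, b, d, e, ha, hb, hc, hd, he, hf⟩ := hf
  obtain ⟨a', b', d', e', ha', hb', hc', hd', he', hg⟩ := hg
  exact ⟨_, _, _, _, ha.sub ha', hb.sub hb', hc.sub hc', hd.sub hd', he.sub he',
    fun t x => by simp only [hf, hg, Pi.sub_apply]; ring⟩

lemma const_mul (hf : IsIntegrableQuartic μ f c) (r : ℝ) :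
    IsIntegrableQuartic μ (fun t x => r * f t x) (fun x => r * c x) := by
  obtain ⟨a, b, d, e, ha, hb, hc, hd, he, hf⟩ := hf
  exact ⟨_, _, _, _, ha.const_mul r, hb.const_mul r, hc.const_mul r, hd.const_mul r,
    he.const_mul r, fun t x => by simp only [hf]; ring⟩

end IsIntegrableQuartic

lemma MeasureTheory.MemLp.integrable_norm_pow_four {F : Type*} [NormedAddCommGroup F]
    {f : α → F} {C : ℝ} (hf : MemLp f 2 μ) (hC : ∀ x, ‖f x‖ ≤ C) :
    Integrable (fun x => ‖f x‖ ^ 4) μ :=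
  ((hf.integrable_norm_pow two_ne_zero).bdd_mul (hf.1.norm.pow 2) (c := C ^ 2)
    (ae_of_all _ fun x => by rw [Pi.pow_apply, norm_pow, norm_norm]; gcongr; exact hC x)).congr
    (ae_of_all _ fun x => by simp only [Pi.pow_apply]; ring)

section InnerProduct

variable {E : Type*} [NormedAddCommGroup E] [InnerProductSpace ℝ E]

lemma MeasureTheory.MemLp.integrable_inner {f g : α → E} (hf : MemLp f 2 μ)
    (hg : MemLp g 2 μ) : Integrable (fun x => inner ℝ (f x) (g x)) μ :=
  (hf.norm.integrable_mul hg.norm).mono' (hf.1.inner hg.1)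
    (ae_of_all _ fun _ => abs_real_inner_le_norm _ _)

lemma norm_add_smul_sq (a b : E) (t : ℝ) :
    ‖a + t • b‖ ^ 2 = ‖a‖ ^ 2 + t * (2 * inner ℝ a b) + t ^ 2 * ‖b‖ ^ 2 := by
  rw [norm_add_sq_real, inner_smul_right, norm_smul, mul_pow, Real.norm_eq_abs, sq_abs]
  ring

lemma isIntegrableQuartic_norm_add_smul_sq {a b : α → E} (ha : MemLp a 2 μ)
    (hb : MemLp b 2 μ) :
    IsIntegrableQuartic μ (fun t x => ‖a x + t • b x‖ ^ 2) (fun x => ‖b x‖ ^ 2) :=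
  ⟨_, _, 0, 0, ha.integrable_norm_pow two_ne_zero, (ha.integrable_inner hb).const_mul 2,
    hb.integrable_norm_pow two_ne_zero, integrable_zero _ _ _, integrable_zero _ _ _,
    fun t x => by simp [norm_add_smul_sq]⟩

lemma isIntegrableQuartic_norm_add_smul_pow_four {a b : α → E} {A B : ℝ}
    (ha : MemLp a 2 μ) (hb : MemLp b 2 μ) (hA : ∀ x, ‖a x‖ ≤ A) (hB : ∀ x, ‖b x‖ ≤ B) :
    IsIntegrableQuartic μ (fun t x => ‖a x + t • b x‖ ^ 4)
      (fun x => 2 * (‖a x‖ ^ 2 * ‖b x‖ ^ 2) + 4 * inner ℝ (a x) (b x) ^ 2) := by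
  have hs := ha.integrable_norm_pow two_ne_zero
  have hn := hb.integrable_norm_pow two_ne_zero
  have hi := ha.integrable_inner hb
  have ms : AEStronglyMeasurable (fun x => ‖a x‖ ^ 2) μ := ha.1.norm.pow 2
  have mi : AEStronglyMeasurable (fun x => inner ℝ (a x) (b x)) μ := ha.1.inner hb.1
  have bs : ∀ᵐ x ∂μ, ‖‖a x‖ ^ 2‖ ≤ A ^ 2 := ae_of_all _ fun x => by
    rw [norm_pow, norm_norm]; exact pow_le_pow_left₀ (norm_nonneg _) (hA x) 2
  have bi : ∀ᵐ x ∂μ, ‖inner ℝ (a x) (b x)‖ ≤ A * B := ae_of_all _ fun x =>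
    (norm_inner_le_norm _ _).trans
      (mul_le_mul (hA x) (hB x) (norm_nonneg _) ((norm_nonneg _).trans (hA x)))
  refine ⟨_, _, _, _, ha.integrable_norm_pow_four hA, (hi.bdd_mul ms bs).const_mul 4,
    ((hn.bdd_mul ms bs).const_mul 2).add
      (((hi.bdd_mul mi bi).congr (ae_of_all _ fun x => (sq _).symm)).const_mul 4),
    (hn.bdd_mul mi bi).const_mul 4, hb.integrable_norm_pow_four hB, fun t x => ?_⟩
  dsimp only
  rw [show ‖a x + t • b x‖ ^ 4 = (‖a x + t • b x‖ ^ 2) ^ 2 by ring, norm_add_smul_sq]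
  ring

end InnerProduct

lemma integrable_mul_conj_sq {w c : α → ℂ} {W : ℝ} (hw : AEStronglyMeasurable w μ)
    (hW : ∀ x, ‖w x‖ ≤ W) (hc : MemLp c 2 μ) :
    Integrable (fun x => w x * conj (c x) ^ 2) μ := by
  have hc2 : Integrable (fun x => conj (c x) ^ 2) μ :=
    (hc.integrable_norm_pow two_ne_zero).mono' (hc.1.star.pow 2)
      (ae_of_all _ fun x => by simp)
  exact hc2.bdd_mul hw (ae_of_all _ hW)

lemma isIntegrableQuartic_re_add_smul_sq_mul_conj_sq {a b c : α → ℂ} {A B : ℝ}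
    (ha : AEStronglyMeasurable a μ) (hb : AEStronglyMeasurable b μ)
    (hA : ∀ x, ‖a x‖ ≤ A) (hB : ∀ x, ‖b x‖ ≤ B) (hc : MemLp c 2 μ) :
    IsIntegrableQuartic μ (fun t x => ((a x + t • b x) ^ 2 * conj (t • c x) ^ 2).re)
      (fun x => (a x ^ 2 * conj (c x) ^ 2).re) := by
  have haa : Integrable (fun x => (a x ^ 2 * conj (c x) ^ 2).re) μ :=
    (integrable_mul_conj_sq (ha.pow 2) (W := A ^ 2)
      (fun x => (norm_pow _ 2).trans_le (pow_le_pow_left₀ (norm_nonneg _) (hA x) 2)) hc).re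
  have hab : Integrable (fun x => (a x * b x * conj (c x) ^ 2).re) μ :=
    (integrable_mul_conj_sq (ha.mul hb) (W := A * B) (fun x => by
      rw [Pi.mul_apply, norm_mul]
      exact mul_le_mul (hA x) (hB x) (norm_nonneg _) ((norm_nonneg _).trans (hA x))) hc).re
  have hbb : Integrable (fun x => (b x ^ 2 * conj (c x) ^ 2).re) μ :=
    (integrable_mul_conj_sq (hb.pow 2) (W := B ^ 2)
      (fun x => (norm_pow _ 2).trans_le (pow_le_pow_left₀ (norm_nonneg _) (hB x) 2)) hc).re
  refine ⟨0, 0, _, _, integrable_zero _ _ _, integrable_zero _ _ _, haa, hab.const_mul 2, hbb,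
    fun t x => ?_⟩
  simp only [Complex.real_smul, map_mul, Complex.conj_ofReal, Pi.zero_apply]
  rw [show (a x + ↑t * b x) ^ 2 * (↑t * conj (c x)) ^ 2
      = ((t ^ 2 : ℝ) : ℂ) * (a x ^ 2 * conj (c x) ^ 2)
        + ((2 * t ^ 3 : ℝ) : ℂ) * (a x * b x * conj (c x) ^ 2)
        + ((t ^ 4 : ℝ) : ℂ) * (b x ^ 2 * conj (c x) ^ 2) by push_cast; ring]
  simp only [Complex.add_re, Complex.re_ofReal_mul]
  ring

end Quartic

section Sobolev

lemma exists_norm_le_of_memLp_two_deriv {E : Type*} [NormedAddCommGroup E]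
    [InnerProductSpace ℝ E] {f : ℝ → E} (hd : Differentiable ℝ f)
    (hf : MemLp f 2 volume) (hf' : MemLp (deriv f) 2 volume) : ∃ C, ∀ x, ‖f x‖ ≤ C := by
  set g := fun x => 2 * inner ℝ (f x) (deriv f x)
  have hg : Integrable g := (hf.integrable_inner hf').const_mul 2
  -- `‖f x‖ ≤ 1 + ‖f x‖²` spares a square root.
  refine ⟨1 + ‖f 0‖ ^ 2 + ∫ y, ‖g y‖, fun x => ?_⟩
  have hftc : ∫ y in 0..x, g y = ‖f x‖ ^ 2 - ‖f 0‖ ^ 2 :=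
    intervalIntegral.integral_eq_sub_of_hasDerivAt (fun y _ => (hd y).hasDerivAt.norm_sq)
      hg.intervalIntegrable
  have hle : ∫ y in 0..x, g y ≤ ∫ y, ‖g y‖ :=
    (le_abs_self _).trans (intervalIntegral.norm_integral_le_integral_norm_uIoc.trans
      (setIntegral_le_integral hg.norm (ae_of_all _ fun _ => norm_nonneg _)))
  nlinarith [sq_nonneg (‖f x‖ - 1)]

lemma deriv_add_smul {F : Type*} [NormedAddCommGroup F] [NormedSpace ℝ F] {u v : ℝ → F}
    (hu : Differentiable ℝ u) (hv : Differentiable ℝ v) (t x : ℝ) :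
    deriv (fun y => u y + t • v y) x = deriv u x + t • deriv v x :=
  ((hu x).hasDerivAt.add ((hv x).hasDerivAt.const_smul t)).deriv

variable {f u v : ℝ → ℂ}

lemma deriv_re_comp (hf : Differentiable ℝ f) (x : ℝ) :
    deriv (fun y => (f y).re) x = (deriv f x).re :=
  (Complex.reCLM.hasFDerivAt.comp_hasDerivAt x (hf x).hasDerivAt).deriv

lemma deriv_im_comp (hf : Differentiable ℝ f) (x : ℝ) :
    deriv (fun y => (f y).im) x = (deriv f x).im :=
  (Complex.imCLM.hasFDerivAt.comp_hasDerivAt x (hf x).hasDerivAt).deriv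

lemma InH1c.exists_norm_le (hf : InH1c f) : ∃ C, ∀ x, ‖f x‖ ≤ C :=
  exists_norm_le_of_memLp_two_deriv hf.1 hf.2.1 hf.2.2

lemma inH1c_zero : InH1c (fun _ => 0) :=
  ⟨differentiable_const 0, MemLp.zero', by simp [deriv_const']⟩

lemma InH1c.add_smul (hu : InH1c u) (hv : InH1c v) (t : ℝ) :
    InH1c (fun x => u x + t • v x) := by
  refine ⟨hu.1.add (hv.1.const_smul t), hu.2.1.add (hv.2.1.const_smul t), ?_⟩
  rw [funext (deriv_add_smul hu.1 hv.1 t)]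
  exact hu.2.2.add (hv.2.2.const_smul t)

lemma InH1c.re (hf : InH1c f) : InH1r (fun x => (f x).re) := by
  refine ⟨fun x => Complex.reCLM.differentiableAt.comp x (hf.1 x), hf.2.1.re, ?_⟩
  rw [funext (deriv_re_comp hf.1)]
  exact hf.2.2.re

lemma InH1c.im (hf : InH1c f) : InH1r (fun x => (f x).im) := by
  refine ⟨fun x => Complex.imCLM.differentiableAt.comp x (hf.1 x), hf.2.1.im, ?_⟩
  rw [funext (deriv_im_comp hf.1)]
  exact hf.2.2.im

lemma InH1r.div_const {g : ℝ → ℝ} (hg : InH1r g) (c : ℝ) : InH1r (fun x => g x / c) := by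
  simp only [div_eq_mul_inv]
  refine ⟨hg.1.mul_const c⁻¹, hg.2.1.mul_const c⁻¹, ?_⟩
  rw [funext fun x => deriv_mul_const_field (u := g) (x := x) c⁻¹]
  exact hg.2.2.mul_const c⁻¹

lemma InH1r.ofReal {g : ℝ → ℝ} (hg : InH1r g) : InH1c (fun x => (g x : ℂ)) := by
  refine ⟨fun x => (hg.1 x).hasDerivAt.ofReal_comp.differentiableAt, hg.2.1.ofReal, ?_⟩
  rw [funext fun x => (hg.1 x).hasDerivAt.ofReal_comp.deriv]
  exact hg.2.2.ofReal

end Sobolev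

section Soliton

lemma one_add_sq_le_cosh_sq (y : ℝ) : 1 + y ^ 2 ≤ Real.cosh y ^ 2 := by
  have h : |y| ≤ |Real.sinh y| := by
    rw [Real.abs_sinh, Real.self_le_sinh_iff]; exact abs_nonneg y
  nlinarith [Real.cosh_sq y, sq_abs y, sq_abs (Real.sinh y), abs_nonneg y]

lemma continuous_phiW (ω : ℝ) : Continuous (phiW ω) := by
  unfold phiW; fun_prop (disch := exact fun x => (Real.cosh_pos _).ne')

lemma hasDerivAt_phiW (ω x : ℝ) :
    HasDerivAt (phiW ω) (-(√ω * Real.tanh (√ω * x)) * phiW ω x) x := by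
  have hφ : phiW ω = fun y => √(2 * ω) * (Real.cosh (√ω * y))⁻¹ := by
    funext y; simp [phiW]
  rw [hφ]
  refine ((((hasDerivAt_id' x).const_mul √ω).cosh.inv (Real.cosh_pos _).ne').const_mul
    _).congr_deriv ?_
  rw [Real.tanh_eq_sinh_div_cosh]
  field_simp

lemma abs_phiW_le (ω x : ℝ) : |phiW ω x| ≤ √(2 * ω) := by
  have := Real.one_le_cosh (√ω * x)
  rw [phiW, abs_of_nonneg (by positivity)]
  exact mul_le_of_le_one_right (Real.sqrt_nonneg _) ((div_le_one (by positivity)).2 this)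

lemma abs_deriv_phiW_le (ω x : ℝ) : |deriv (phiW ω) x| ≤ √ω * |phiW ω x| := by
  have htanh : |Real.tanh (√ω * x)| ≤ 1 :=
    abs_le.2 ⟨(Real.neg_one_lt_tanh _).le, (Real.tanh_lt_one _).le⟩
  rw [(hasDerivAt_phiW ω x).deriv, abs_mul, abs_neg, abs_mul,
    abs_of_nonneg (Real.sqrt_nonneg ω)]
  exact mul_le_mul_of_nonneg_right (mul_le_of_le_one_right (Real.sqrt_nonneg ω) htanh)
    (abs_nonneg _)

lemma memLp_phiW {ω : ℝ} (hω : 0 < ω) : MemLp (phiW ω) 2 volume := by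
  have hcont := continuous_phiW ω
  refine (memLp_two_iff_integrable_sq hcont.aestronglyMeasurable).2 ?_
  refine ((integrable_inv_one_add_sq.comp_mul_left' (Real.sqrt_pos.2 hω).ne').const_mul
    (2 * ω)).mono' (hcont.pow 2).aestronglyMeasurable (ae_of_all _ fun x => ?_)
  rw [Real.norm_eq_abs, abs_of_nonneg (sq_nonneg _), phiW, mul_pow, Real.sq_sqrt (by positivity),
    div_pow, one_pow, one_div]
  gcongr
  exact one_add_sq_le_cosh_sq _

lemma inH1r_phiW {ω : ℝ} (hω : 0 < ω) : InH1r (phiW ω) :=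
  ⟨fun x => (hasDerivAt_phiW ω x).differentiableAt, memLp_phiW hω,
    (memLp_phiW hω).of_le_mul (measurable_deriv _).aestronglyMeasurable
      (ae_of_all _ fun x => abs_deriv_phiW_le ω x)⟩

lemma InH1r.integrable_QLa_integrand {u : ℝ → ℝ} (hu : InH1r u) (ω a : ℝ) :
    Integrable (fun x => deriv u x ^ 2 + ω * u x ^ 2 - a * phiW ω x ^ 2 * u x ^ 2) := by
  have hw : Integrable (fun x => a * phiW ω x ^ 2 * u x ^ 2) :=
    hu.2.1.integrable_sq.bdd_mul (c := |a| * √(2 * ω) ^ 2)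
      ((continuous_phiW ω).aestronglyMeasurable.pow 2 |>.const_mul a) (ae_of_all _ fun x => by
        rw [norm_mul, norm_pow, Real.norm_eq_abs, Real.norm_eq_abs]
        gcongr
        exact abs_phiW_le ω x)
  have := hu.2.2.integrable_sq
  have := hu.2.1.integrable_sq
  fun_prop

end Soliton

section Action

variable (κ₁ κ₂ γ ω : ℝ)

noncomputable def actionDensity (u : Pair) (x : ℝ) : ℝ :=
  1 / 2 * ‖deriv u.1 x‖ ^ 2 - κ₁ / 4 * ‖u.1 x‖ ^ 4 + 1 / 2 * ‖deriv u.2 x‖ ^ 2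
    - κ₂ / 4 * ‖u.2 x‖ ^ 4 - γ / 2 * (u.1 x ^ 2 * conj (u.2 x) ^ 2).re
    + ω * (1 / 2 * (‖u.1 x‖ ^ 2 + ‖u.2 x‖ ^ 2))

variable {κ₁ κ₂ γ ω}

lemma Sfun_eq_integral_actionDensity {u : Pair} (hu₁ : InH1c u.1) (hu₂ : InH1c u.2) :
    Sfun κ₁ κ₂ γ ω u = ∫ x, actionDensity κ₁ κ₂ γ ω u x := by
  obtain ⟨C₁, hC₁⟩ := hu₁.exists_norm_le
  obtain ⟨C₂, hC₂⟩ := hu₂.exists_norm_le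
  have h₁ := hu₁.2.2.integrable_norm_pow two_ne_zero
  have h₂ := hu₁.2.1.integrable_norm_pow_four hC₁
  have h₃ := hu₂.2.2.integrable_norm_pow two_ne_zero
  have h₄ := hu₂.2.1.integrable_norm_pow_four hC₂
  have h₅ : Integrable (fun x => u.1 x ^ 2 * conj (u.2 x) ^ 2) :=
    integrable_mul_conj_sq (hu₁.1.continuous.aestronglyMeasurable.pow 2) (W := C₁ ^ 2)
      (fun x => (norm_pow _ 2).trans_le (pow_le_pow_left₀ (norm_nonneg _) (hC₁ x) 2)) hu₂.2.1
  have h₅' : Integrable (fun x => (u.1 x ^ 2 * conj (u.2 x) ^ 2).re) := h₅.re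
  have h₆ := hu₁.2.1.integrable_norm_pow two_ne_zero
  have h₇ := hu₂.2.1.integrable_norm_pow two_ne_zero
  have hre : (∫ x, u.1 x ^ 2 * conj (u.2 x) ^ 2).re = ∫ x, (u.1 x ^ 2 * conj (u.2 x) ^ 2).re :=
    (integral_re h₅).symm
  rw [Sfun, En, Qm, hre]
  simp (disch := fun_prop) only [actionDensity, integral_add, integral_sub, integral_const_mul]

lemma isIntegrableQuartic_actionDensity {u v : Pair} (hu₁ : InH1c u.1) (hu₂ : u.2 = 0)
    (hv₁ : InH1c v.1) (hv₂ : InH1c v.2) :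
    IsIntegrableQuartic volume (fun t x => actionDensity κ₁ κ₂ γ ω (u + t • v) x)
      (fun x => 1 / 2 * ‖deriv v.1 x‖ ^ 2
        - κ₁ / 4 * (2 * (‖u.1 x‖ ^ 2 * ‖v.1 x‖ ^ 2) + 4 * inner ℝ (u.1 x) (v.1 x) ^ 2)
        + 1 / 2 * ‖deriv v.2 x‖ ^ 2 - γ / 2 * (u.1 x ^ 2 * conj (v.2 x) ^ 2).re
        + ω * (1 / 2 * (‖v.1 x‖ ^ 2 + ‖v.2 x‖ ^ 2))) := by
  obtain ⟨u₁, u₂⟩ := u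
  obtain rfl : u₂ = 0 := hu₂
  obtain ⟨A, hA⟩ := hu₁.exists_norm_le
  obtain ⟨B₁, hB₁⟩ := hv₁.exists_norm_le
  obtain ⟨B₂, hB₂⟩ := hv₂.exists_norm_le
  have h0 : MemLp (0 : ℝ → ℂ) 2 volume := MemLp.zero
  have kin₁ := isIntegrableQuartic_norm_add_smul_sq hu₁.2.2 hv₁.2.2
  have kin₂ := isIntegrableQuartic_norm_add_smul_sq h0 hv₂.2.2
  have pot₁ := isIntegrableQuartic_norm_add_smul_pow_four hu₁.2.1 hv₁.2.1 hA hB₁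
  have pot₂ := isIntegrableQuartic_norm_add_smul_pow_four h0 hv₂.2.1 (fun _ => norm_zero.le) hB₂
  have cpl := isIntegrableQuartic_re_add_smul_sq_mul_conj_sq
    hu₁.1.continuous.aestronglyMeasurable hv₁.1.continuous.aestronglyMeasurable hA hB₁ hv₂.2.1
  have mass₁ := isIntegrableQuartic_norm_add_smul_sq hu₁.2.1 hv₁.2.1
  have mass₂ := isIntegrableQuartic_norm_add_smul_sq h0 hv₂.2.1
  refine (((((((kin₁.const_mul (1 / 2)).sub (pot₁.const_mul (κ₁ / 4))).add
    (kin₂.const_mul (1 / 2))).sub (pot₂.const_mul (κ₂ / 4))).sub (cpl.const_mul (γ / 2))).add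
    (((mass₁.add mass₂).const_mul (1 / 2)).const_mul ω)).congr (fun t x => ?_) (fun x => ?_))
  · have h₁ : deriv ((u₁, 0) + t • v).1 x = deriv u₁ x + t • deriv v.1 x :=
      deriv_add_smul hu₁.1 hv₁.1 t x
    have h₂ : deriv ((u₁, 0) + t • v).2 x = (0 : ℝ → ℂ) x + t • deriv v.2 x := by
      have h := deriv_add_smul (differentiable_const (0 : ℂ)) hv₂.1 t x
      rwa [deriv_const] at h
    rw [actionDensity, h₁, h₂]
    simp
  · simp

end Action

theorem second_variation_decomposition_general (κ₁ κ₂ γ ω : ℝ)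
    (hκ₁ : 0 < κ₁) (hω : 0 < ω) :
    ∀ v : Pair, InH1c v.1 → InH1c v.2 →
      iteratedDeriv 2 (fun t : ℝ => Sfun κ₁ κ₂ γ ω (phivec κ₁ ω + t • v)) 0
        = QLa ω 3 (fun x => (v.1 x).re) + QLa ω 1 (fun x => (v.1 x).im)
          + QLa ω (γ / κ₁) (fun x => (v.2 x).re)
          + QLa ω (-(γ / κ₁)) (fun x => (v.2 x).im) := by
  intro v hv₁ hv₂
  have hφ : InH1c (phivec κ₁ ω).1 := ((inH1r_phiW hω).div_const _).ofReal
  have hS : (fun t : ℝ => Sfun κ₁ κ₂ γ ω (phivec κ₁ ω + t • v))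
      = fun t => ∫ x, actionDensity κ₁ κ₂ γ ω (phivec κ₁ ω + t • v) x :=
    funext fun t =>
      Sfun_eq_integral_actionDensity (hφ.add_smul hv₁ t) (inH1c_zero.add_smul hv₂ t)
  have q₁ := hv₁.re.integrable_QLa_integrand ω 3
  have q₂ := hv₁.im.integrable_QLa_integrand ω 1
  have q₃ := hv₂.re.integrable_QLa_integrand ω (γ / κ₁)
  have q₄ := hv₂.im.integrable_QLa_integrand ω (-(γ / κ₁))
  rw [hS, (isIntegrableQuartic_actionDensity hφ rfl hv₁ hv₂).iteratedDeriv_two_integral, QLa,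
    QLa, QLa, QLa, ← integral_add q₁ q₂, ← integral_add (by fun_prop) q₃,
    ← integral_add (by fun_prop) q₄, ← integral_const_mul]
  refine integral_congr_ae (ae_of_all _ fun x => ?_)
  have hκ : √κ₁ ^ 2 = κ₁ := Real.sq_sqrt hκ₁.le
  simp only [deriv_re_comp hv₁.1, deriv_im_comp hv₁.1, deriv_re_comp hv₂.1, deriv_im_comp hv₂.1,
    phivec, Complex.sq_norm, Complex.normSq_apply, Complex.inner]
  simp only [Complex.mul_re, Complex.mul_im, Complex.conj_re, Complex.conj_im, Complex.ofReal_re,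
    Complex.ofReal_im, sq]
  field_simp
  rw [hκ]
  ring

/-- decomposition of the second variation of `S_ω` at `⃗φ_ω`:
`⟨S_ω''(⃗φ_ω)⃗v,⃗v⟩ = ⟨L₃ Re v₁,Re v₁⟩ + ⟨L₁ Im v₁,Im v₁⟩
 + ⟨L_{γ/κ₁} Re v₂,Re v₂⟩ + ⟨L_{-γ/κ₁} Im v₂,Im v₂⟩`. -/
theorem second_variation_decomposition (κ₁ κ₂ γ ω : ℝ)
    (hκ₁ : 0 < κ₁) (hκ₂ : 0 < κ₂) (hγ : 0 < γ) (hω : 0 < ω) :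
    ∀ v : Pair, InH1c v.1 → InH1c v.2 →
      iteratedDeriv 2 (fun t : ℝ => Sfun κ₁ κ₂ γ ω (phivec κ₁ ω + t • v)) 0
        = QLa ω 3 (fun x => (v.1 x).re) + QLa ω 1 (fun x => (v.1 x).im)
          + QLa ω (γ / κ₁) (fun x => (v.2 x).re)
          + QLa ω (-(γ / κ₁)) (fun x => (v.2 x).im) :=
  second_variation_decomposition_general κ₁ κ₂ γ ω hκ₁ hω
end

section
/- In the degenerate case γ = κ₁ with κ₂ > κ₁, along the mass-preserving curve ⃗φ_λ = ⃗φ_ω + λ⃗ψ_ω + (√(1−λ²)−1)⃗φ_ω one has E(⃗φ_ω) − E(⃗φ_λ) = −ν₀λ⁴ + o(λ⁴) as λ → 0, and hence E(⃗φ_λ) < E(⃗φ_ω) for all sufficiently small λ ≠ 0, where ν₀ = ((κ₁−κ₂)/(4κ₁²))‖φ_ω‖⁴_{L⁴} < 0. -/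
open MeasureTheory Real Asymptotics

/-! Every point of the curve is `(√(1-λ²) g, λ g)` with the real profile `g = κ₁^{-1/2} φ_ω`, so
its kinetic energy equals that of `g` and its quartic terms are a polynomial in `λ²`. For
`γ = κ₁` the `λ²` terms cancel and `E(⃗φ_ω) - E(⃗φ_λ) = -ν₀ λ⁴` holds exactly for `|λ| ≤ 1`;
the remainder is thus zero near `0`. The sign of `ν₀` comes from `∫ φ_ω⁴ > 0`, where
integrability follows from `sech⁴ t ≤ (1 + t²)⁻¹`. -/

lemma Real.one_add_sq_le_cosh_sq (t : ℝ) : 1 + t ^ 2 ≤ cosh t ^ 2 := by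
  have h : |t| ≤ |sinh t| := by rw [abs_sinh]; exact self_le_sinh_iff.2 (abs_nonneg t)
  rw [cosh_sq']
  linarith [sq_le_sq.2 h]

lemma Real.integrable_inv_cosh_pow_four : Integrable fun t : ℝ => (cosh t)⁻¹ ^ 4 := by
  refine integrable_inv_one_add_sq.mono' (by fun_prop) (Filter.Eventually.of_forall fun t => ?_)
  have := one_le_cosh t
  rw [Real.norm_eq_abs, abs_of_nonneg (by positivity), inv_pow]
  calc (cosh t ^ 4)⁻¹ ≤ (cosh t ^ 2)⁻¹ := by gcongr; norm_num
    _ ≤ (1 + t ^ 2)⁻¹ := by gcongr; exact one_add_sq_le_cosh_sq t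

lemma phiW_pos {ω : ℝ} (hω : 0 < ω) (x : ℝ) : 0 < phiW ω x := by
  have := cosh_pos (√ω * x)
  unfold phiW
  positivity

lemma differentiable_phiW (ω : ℝ) : Differentiable ℝ (phiW ω) := by
  unfold phiW
  fun_prop (disch := exact fun x => (cosh_pos _).ne')

lemma phiW_pow_four (ω x : ℝ) (hω : 0 ≤ ω) :
    phiW ω x ^ 4 = 4 * ω ^ 2 * (cosh (√ω * x))⁻¹ ^ 4 := by
  rw [phiW, mul_pow, show (4 : ℕ) = 2 * 2 from rfl, pow_mul, sq_sqrt (by positivity)]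
  ring

lemma integrable_phiW_pow_four {ω : ℝ} (hω : 0 < ω) : Integrable fun x => phiW ω x ^ 4 := by
  simp_rw [phiW_pow_four _ _ hω.le]
  exact (integrable_inv_cosh_pow_four.comp_mul_left' (sqrt_pos.2 hω).ne').const_mul _

lemma integral_phiW_pow_four_pos {ω : ℝ} (hω : 0 < ω) : 0 < ∫ x, phiW ω x ^ 4 := by
  rw [integral_pos_iff_support_of_nonneg (fun x => by positivity) (integrable_phiW_pow_four hω)]
  have : Function.support (fun x => phiW ω x ^ 4) = Set.univ :=
    Set.eq_univ_of_forall fun x => pow_ne_zero 4 (phiW_pos hω x).ne'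
  simp [this]

noncomputable def alignedPair (a b : ℝ) (g : ℝ → ℝ) : Pair :=
  (fun x => ((a * g x : ℝ) : ℂ), fun x => ((b * g x : ℝ) : ℂ))

lemma deriv_ofReal_const_mul {g : ℝ → ℝ} (hg : Differentiable ℝ g) (c x : ℝ) :
    deriv (fun y => ((c * g y : ℝ) : ℂ)) x = ((c * deriv g x : ℝ) : ℂ) :=
  ((hg x).hasDerivAt.const_mul c).ofReal_comp.deriv

lemma En_alignedPair (κ₁ κ₂ γ : ℝ) {g : ℝ → ℝ} (hg : Differentiable ℝ g) (a b : ℝ) :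
    En κ₁ κ₂ γ (alignedPair a b g)
      = (a ^ 2 + b ^ 2) / 2 * (∫ x, deriv g x ^ 2)
        - (κ₁ * a ^ 4 + κ₂ * b ^ 4 + 2 * γ * a ^ 2 * b ^ 2) / 4 * ∫ x, g x ^ 4 := by
  have kinetic (c : ℝ) : (fun x => ‖deriv (fun y => ((c * g y : ℝ) : ℂ)) x‖ ^ 2)
      = fun x => c ^ 2 * deriv g x ^ 2 := by
    ext x
    rw [deriv_ofReal_const_mul hg, Complex.norm_real, Real.norm_eq_abs, sq_abs, mul_pow]
  have quartic (c : ℝ) : (fun x => ‖((c * g x : ℝ) : ℂ)‖ ^ 4) = fun x => c ^ 4 * g x ^ 4 := by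
    ext x
    rw [Complex.norm_real, Real.norm_eq_abs, pow_abs, abs_of_nonneg (by positivity), mul_pow]
  have coupling : (fun x => ((a * g x : ℝ) : ℂ) ^ 2 * (starRingEnd ℂ ((b * g x : ℝ) : ℂ)) ^ 2)
      = fun x => ((a ^ 2 * b ^ 2 * g x ^ 4 : ℝ) : ℂ) := by
    ext x
    rw [Complex.conj_ofReal]
    push_cast
    ring
  simp only [En, alignedPair, kinetic, quartic, coupling, integral_complex_ofReal,
    Complex.ofReal_re, integral_const_mul]
  ring

lemma phivec_eq_alignedPair (κ₁ ω : ℝ) :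
    phivec κ₁ ω = alignedPair 1 0 (fun x => phiW ω x / √κ₁) := by
  ext x <;> simp [phivec, alignedPair]

lemma phivec_add_smul_psivec_add_smul_phivec (κ₁ ω a b : ℝ) :
    phivec κ₁ ω + a • psivec κ₁ ω + b • phivec κ₁ ω
      = alignedPair (1 + b) a (fun x => phiW ω x / √κ₁) := by
  ext x
  · simp [phivec, psivec, alignedPair]
    ring
  · simp [phivec, psivec, alignedPair]

lemma integral_phiW_div_sqrt_pow_four {κ₁ : ℝ} (hκ₁ : 0 ≤ κ₁) (ω : ℝ) :
    ∫ x, (phiW ω x / √κ₁) ^ 4 = (∫ x, phiW ω x ^ 4) / κ₁ ^ 2 := by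
  have : √κ₁ ^ 4 = κ₁ ^ 2 := by
    rw [show (4 : ℕ) = 2 * 2 from rfl, pow_mul, sq_sqrt hκ₁]
  simp only [div_pow, this, integral_div]

lemma En_phivec_sub_En_curve (κ₂ γ : ℝ) {κ₁ : ℝ} (hκ₁ : 0 ≤ κ₁) (ω : ℝ) {lam : ℝ}
    (hlam : lam ^ 2 ≤ 1) :
    En κ₁ κ₂ γ (phivec κ₁ ω)
        - En κ₁ κ₂ γ (phivec κ₁ ω + lam • psivec κ₁ ω + (√(1 - lam ^ 2) - 1) • phivec κ₁ ω)
      = ((γ - κ₁) / 2 * lam ^ 2 + (κ₁ + κ₂ - 2 * γ) / 4 * lam ^ 4) / κ₁ ^ 2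
        * ∫ x, phiW ω x ^ 4 := by
  have hg : Differentiable ℝ fun x => phiW ω x / √κ₁ := (differentiable_phiW ω).div_const _
  have hs : √(1 - lam ^ 2) ^ 2 = 1 - lam ^ 2 := sq_sqrt (by linarith)
  rw [phivec_add_smul_psivec_add_smul_phivec, phivec_eq_alignedPair, En_alignedPair _ _ _ hg,
    En_alignedPair _ _ _ hg, add_sub_cancel, integral_phiW_div_sqrt_pow_four hκ₁,
    show √(1 - lam ^ 2) ^ 4 = (√(1 - lam ^ 2) ^ 2) ^ 2 by ring, hs]
  ring

/-- degenerate case `γ = κ₁ < κ₂`: along the mass-preserving curve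
`⃗φ_λ = ⃗φ_ω + λ⃗ψ_ω + (√(1-λ²)-1)⃗φ_ω` one has
`E(⃗φ_ω) - E(⃗φ_λ) = -ν₀λ⁴ + o(λ⁴)` as `λ → 0`, where
`ν₀ = ((κ₁-κ₂)/(4κ₁²))‖φ_ω‖⁴_{L⁴} < 0`; hence `E(⃗φ_λ) < E(⃗φ_ω)` for all
sufficiently small `λ ≠ 0`. -/
theorem energy_decreases_along_curve (κ₁ κ₂ ω : ℝ)
    (hκ₁ : 0 < κ₁) (hκ : κ₁ < κ₂) (hω : 0 < ω)
    (ν₀ : ℝ) (hν₀ : ν₀ = ((κ₁ - κ₂) / (4 * κ₁ ^ 2)) * ∫ x : ℝ, (phiW ω x) ^ 4)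
    (curve : ℝ → Pair)
    (hcurve : ∀ lam : ℝ, curve lam = phivec κ₁ ω + lam • psivec κ₁ ω
        + (Real.sqrt (1 - lam ^ 2) - 1) • phivec κ₁ ω) :
    ν₀ < 0 ∧
    (fun lam : ℝ => En κ₁ κ₂ κ₁ (phivec κ₁ ω) - En κ₁ κ₂ κ₁ (curve lam)
        - (-ν₀ * lam ^ 4)) =o[nhds (0 : ℝ)] (fun lam : ℝ => lam ^ 4) ∧
    ∃ δ > 0, ∀ lam : ℝ, lam ≠ 0 → |lam| < δ →
      En κ₁ κ₂ κ₁ (curve lam) < En κ₁ κ₂ κ₁ (phivec κ₁ ω) := by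
  have hν₀neg : ν₀ < 0 := hν₀ ▸ mul_neg_of_neg_of_pos
    (div_neg_of_neg_of_pos (by linarith) (by positivity)) (integral_phiW_pow_four_pos hω)
  have gap (lam : ℝ) (hlam : lam ^ 2 ≤ 1) :
      En κ₁ κ₂ κ₁ (phivec κ₁ ω) - En κ₁ κ₂ κ₁ (curve lam) = -ν₀ * lam ^ 4 := by
    rw [hcurve, En_phivec_sub_En_curve κ₂ κ₁ hκ₁.le ω hlam, hν₀]
    field_simp
    ring
  have near_zero : ∀ᶠ lam : ℝ in nhds 0, lam ^ 2 ≤ 1 :=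
    (continuous_pow 2).continuousAt.eventually (ge_mem_nhds (by norm_num))
  refine ⟨hν₀neg, ?_, 1, one_pos, fun lam hlam hlt => ?_⟩
  · refine (isLittleO_zero _ _).congr' (near_zero.mono fun lam h => ?_) .rfl
    simp only [gap lam h, sub_self]
  · have hgap := gap lam (sq_le_one_iff_abs_le_one lam |>.2 hlt.le)
    have hpos : 0 < -ν₀ * lam ^ 4 := mul_pos (neg_pos.2 hν₀neg) (by positivity)
    linarith
end
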